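/- Let r, s, t be nonzero real numbers and set e := r + t − s, f := r + s − t, g := s + t − r, and D := −(e·f + f·g + g·e). If D > 0 and √D < |e|, √D < |f|, √D < |g|, then arsinh( (e/(r·t))·(√D/2) ) + arsinh( (f/(r·s))·(√D/2) ) + arsinh( (g/(s·t))·(√D/2) ) = 0, where arsinh is the inverse hyperbolic sine. (This is the D > 0, arcsinh part of the paper's Lemma on vertex identities in a topograph: r, s, t are the labels on the three regions adjacent to a vertex, e, f, g the labels on the three adjacent oriented edges, and D the discriminant.) -/

import Mathlib

/-!
Write `e, f, g` for the edge labels and `d = √D`, so that `4rt = e² - d²` (and similarly for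
`rs`, `st`). Each term is then `arsinh (2ed / (e² - d²)) = log ((e + d) / (e - d))`, and the three
logarithms cancel because `(e + d)(f + d)(g + d) - (e - d)(f - d)(g - d) = 2d (d² + ef + fg + ge) = 0`.
-/

open Real

theorem add_ne_zero_and_sub_ne_zero_of_sq_lt_sq {a b : ℝ} (h : b ^ 2 < a ^ 2) :
    a + b ≠ 0 ∧ a - b ≠ 0 := by
  constructor <;> intro h0
  · rw [eq_neg_of_add_eq_zero_left h0, neg_sq] at h
    exact lt_irrefl _ h
  · rw [sub_eq_zero.mp h0] at h
    exact lt_irrefl _ h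

theorem Real.arsinh_two_mul_mul_div_sq_sub_sq {a b : ℝ} (h : b ^ 2 < a ^ 2) :
    arsinh (2 * a * b / (a ^ 2 - b ^ 2)) = log ((a + b) / (a - b)) := by
  obtain ⟨hadd, hsub⟩ := add_ne_zero_and_sub_ne_zero_of_sq_lt_sq h
  have hprod : 0 < (a + b) * (a - b) := by nlinarith
  have hsq : a ^ 2 - b ^ 2 ≠ 0 := by nlinarith
  rw [← arsinh_sinh (log _), sinh_log (div_pos_iff.mpr (mul_pos_iff.mp hprod))]
  congr 1
  field_simp
  ring

theorem arsinh_vertex_sum_eq_zero {e f g d : ℝ} (hd : d ^ 2 = -(e * f + f * g + g * e))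
    (he : d ^ 2 < e ^ 2) (hf : d ^ 2 < f ^ 2) (hg : d ^ 2 < g ^ 2) :
    arsinh (2 * e * d / (e ^ 2 - d ^ 2)) + arsinh (2 * f * d / (f ^ 2 - d ^ 2)) +
      arsinh (2 * g * d / (g ^ 2 - d ^ 2)) = 0 := by
  obtain ⟨he₁, he₂⟩ := add_ne_zero_and_sub_ne_zero_of_sq_lt_sq he
  obtain ⟨hf₁, hf₂⟩ := add_ne_zero_and_sub_ne_zero_of_sq_lt_sq hf
  obtain ⟨hg₁, hg₂⟩ := add_ne_zero_and_sub_ne_zero_of_sq_lt_sq hg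
  have hcancel : (e + d) * (f + d) * (g + d) = (e - d) * (f - d) * (g - d) := by
    linear_combination 2 * d * hd
  rw [arsinh_two_mul_mul_div_sq_sub_sq he, arsinh_two_mul_mul_div_sq_sub_sq hf,
    arsinh_two_mul_mul_div_sq_sub_sq hg, ← log_mul (by positivity) (by positivity),
    ← log_mul (by positivity) (by positivity)]
  convert log_one
  field_simp
  exact hcancel

theorem div_mul_half_eq_two_mul_mul_div {a b c d : ℝ} (h : (a + c - b) ^ 2 - d ^ 2 = 4 * (a * c)) :
    (a + c - b) / (a * c) * (d / 2) = 2 * (a + c - b) * d / ((a + c - b) ^ 2 - d ^ 2) := by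
  rw [h]
  ring

theorem stmt_7 (r s t : ℝ)
    (hD : 0 < -((r + t - s) * (r + s - t) + (r + s - t) * (s + t - r) +
      (s + t - r) * (r + t - s)))
    (h1 : Real.sqrt (-((r + t - s) * (r + s - t) + (r + s - t) * (s + t - r) +
      (s + t - r) * (r + t - s))) < |r + t - s|)
    (h2 : Real.sqrt (-((r + t - s) * (r + s - t) + (r + s - t) * (s + t - r) +
      (s + t - r) * (r + t - s))) < |r + s - t|)
    (h3 : Real.sqrt (-((r + t - s) * (r + s - t) + (r + s - t) * (s + t - r) +
      (s + t - r) * (r + t - s))) < |s + t - r|) :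
    Real.arsinh (((r + t - s) / (r * t)) *
        (Real.sqrt (-((r + t - s) * (r + s - t) + (r + s - t) * (s + t - r) +
          (s + t - r) * (r + t - s))) / 2)) +
      Real.arsinh (((r + s - t) / (r * s)) *
        (Real.sqrt (-((r + t - s) * (r + s - t) + (r + s - t) * (s + t - r) +
          (s + t - r) * (r + t - s))) / 2)) +
      Real.arsinh (((s + t - r) / (s * t)) *
        (Real.sqrt (-((r + t - s) * (r + s - t) + (r + s - t) * (s + t - r) +
          (s + t - r) * (r + t - s))) / 2)) = 0 := by
  set d := Real.sqrt (-((r + t - s) * (r + s - t) + (r + s - t) * (s + t - r) +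
      (s + t - r) * (r + t - s)))
  have hd : d ^ 2 = -((r + t - s) * (r + s - t) + (r + s - t) * (s + t - r) +
      (s + t - r) * (r + t - s)) := sq_sqrt hD.le
  have hsq {x : ℝ} (h : d < |x|) : d ^ 2 < x ^ 2 :=
    sq_lt_sq.mpr (by rwa [abs_of_nonneg (sqrt_nonneg _)])
  rw [div_mul_half_eq_two_mul_mul_div (b := s) (by linear_combination -hd),
    div_mul_half_eq_two_mul_mul_div (b := t) (by linear_combination -hd),
    div_mul_half_eq_two_mul_mul_div (b := r) (by linear_combination -hd)]
  exact arsinh_vertex_sum_eq_zero hd (hsq h1) (hsq h2) (hsq h3)
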